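/- arXiv:0708.4006 — 4 statements merged into one kernel-verified Lean document; each statement's English description precedes it below -/
import Mathlib

section
/- Let k be a field, G a finite group, and β a normalized 3-cocycle on G with values in kˣ. Then for all g, x, y, z ∈ G the elements θ_g defined from β satisfy θ_g(x,y)·θ_g(xy,z) = θ_{x⁻¹gx}(y,z)·θ_g(x,yz). -/
open scoped BigOperators TensorProduct

namespace StringyOrbifold

/-- A normalized 3-cocycle on `G` with values in `kˣ`. -/
def IsNormalized3Cocycle {k G : Type*} [Field k] [Group G] (β : G → G → G → kˣ) : Prop :=
  (∀ g h l m : G, β g h l * β g (h * l) m * β h l m = β (g * h) l m * β g h (l * m)) ∧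
  (∀ g h : G, β 1 g h = 1 ∧ β g 1 h = 1 ∧ β g h 1 = 1)

/-- A normalized 2-cocycle on `G` with values in `kˣ`. -/
def IsNormalized2Cocycle {k G : Type*} [Field k] [Group G] (α : G → G → kˣ) : Prop :=
  (∀ g h l : G, α g h * α (g * h) l = α h l * α g (h * l)) ∧
  (∀ g : G, α g 1 = 1 ∧ α 1 g = 1)

/-- `θ_g(x,y) = β(g,x,y)·β(x,y,(xy)⁻¹g(xy)) / β(x,x⁻¹gx,y)`. -/
def ddTheta {k G : Type*} [Field k] [Group G] (β : G → G → G → kˣ) (g x y : G) : kˣ :=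
  β g x y * β x y ((x * y)⁻¹ * g * (x * y)) / β x (x⁻¹ * g * x) y

/-- `γ_x(g₁,g₂) = β(g₁,g₂,x)·β(x,x⁻¹g₁x,x⁻¹g₂x) / β(g₁,x,x⁻¹g₂x)`. -/
def ddGamma {k G : Type*} [Field k] [Group G] (β : G → G → G → kˣ) (x g1 g2 : G) : kˣ :=
  β g1 g2 x * β x (x⁻¹ * g1 * x) (x⁻¹ * g2 * x) / β g1 x (x⁻¹ * g2 * x)

/-- The trivial 3-cocycle. -/
def trivCocycle (k G : Type*) [Field k] [Group G] : G → G → G → kˣ := fun _ _ _ => 1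

/-- The underlying `k`-vector space of the twisted Drinfel'd double `D^β(k[G])`:
the free `k`-module on the basis `⟨g,x⟩`, `(g,x) ∈ G × G`, realized as functions. -/
abbrev DD (k G : Type*) := G × G → k

/-- The function model for `D^β(k[G]) ⊗ D^β(k[G])`. -/
abbrev DD2 (k G : Type*) := (G × G) × (G × G) → k

/-- The function model for the threefold tensor power of `D^β(k[G])`. -/
abbrev DD3 (k G : Type*) := (G × G) × (G × G) × (G × G) → k

/-- The basis element `⟨g,x⟩` of `D^β(k[G])`. -/
def ddBasis {k G : Type*} [Field k] [DecidableEq G] (g x : G) : DD k G :=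
  fun p => if p = (g, x) then 1 else 0

/-- The multiplication of `D^β(k[G])`, the bilinear extension of
`⟨g,x⟩·⟨h,y⟩ = δ_{g,xhx⁻¹} θ_g(x,y) ⟨g,xy⟩`. -/
def ddMul {k G : Type*} [Field k] [Group G] [Fintype G]
    (β : G → G → G → kˣ) (a b : DD k G) : DD k G :=
  fun p => ∑ x : G, a (p.1, x) * b (x⁻¹ * p.1 * x, x⁻¹ * p.2) * (ddTheta β p.1 x (x⁻¹ * p.2) : k)

/-- The identity `Σ_{h∈G} ⟨h,e⟩` of `D^β(k[G])`. -/
def ddOne (k G : Type*) [Field k] [Group G] [Fintype G] [DecidableEq G] : DD k G :=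
  ∑ g : G, ddBasis g 1

/-- The elementary tensor `a ⊗ b` in the function model of `D^β(k[G]) ⊗ D^β(k[G])`. -/
def ddTensor {k G : Type*} [Field k] (a b : DD k G) : DD2 k G :=
  fun p => a p.1 * b p.2

/-- The elementary tensor `a ⊗ b ⊗ c` in the function model of the triple tensor power. -/
def ddTensor3 {k G : Type*} [Field k] (a b c : DD k G) : DD3 k G :=
  fun p => a p.1 * b p.2.1 * c p.2.2

/-- Componentwise multiplication on `D^β(k[G]) ⊗ D^{β'}(k[G])` in the function model. -/
def dd2Mul {k G : Type*} [Field k] [Group G] [Fintype G]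
    (β β' : G → G → G → kˣ) (a b : DD2 k G) : DD2 k G :=
  fun p => ∑ x : G, ∑ y : G,
    a ((p.1.1, x), (p.2.1, y)) *
      b ((x⁻¹ * p.1.1 * x, x⁻¹ * p.1.2), (y⁻¹ * p.2.1 * y, y⁻¹ * p.2.2)) *
      (ddTheta β p.1.1 x (x⁻¹ * p.1.2) : k) * (ddTheta β' p.2.1 y (y⁻¹ * p.2.2) : k)

/-- Componentwise multiplication on the threefold tensor power of `D^β(k[G])`. -/
def dd3Mul {k G : Type*} [Field k] [Group G] [Fintype G]
    (β : G → G → G → kˣ) (a b : DD3 k G) : DD3 k G :=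
  fun p => ∑ x : G, ∑ y : G, ∑ z : G,
    a ((p.1.1, x), (p.2.1.1, y), (p.2.2.1, z)) *
      b ((x⁻¹ * p.1.1 * x, x⁻¹ * p.1.2), (y⁻¹ * p.2.1.1 * y, y⁻¹ * p.2.1.2),
        (z⁻¹ * p.2.2.1 * z, z⁻¹ * p.2.2.2)) *
      (ddTheta β p.1.1 x (x⁻¹ * p.1.2) : k) * (ddTheta β p.2.1.1 y (y⁻¹ * p.2.1.2) : k) *
      (ddTheta β p.2.2.1 z (z⁻¹ * p.2.2.2) : k)

/-- The comultiplication of `D^β(k[G])`: the linear extension of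
`Δ(⟨g,x⟩) = Σ_{g₁g₂=g} γ_x(g₁,g₂) ⟨g₁,x⟩ ⊗ ⟨g₂,x⟩`. -/
def ddComul {k G : Type*} [Field k] [Group G] [DecidableEq G]
    (β : G → G → G → kˣ) (a : DD k G) : DD2 k G :=
  fun p =>
    if p.1.2 = p.2.2 then (ddGamma β p.1.2 p.1.1 p.2.1 : k) * a (p.1.1 * p.2.1, p.1.2) else 0

/-- The map `id ⊗ Δ` from `D^β(k[G])^{⊗2}` to `D^β(k[G])^{⊗3}` in the function model. -/
def idTensorComul {k G : Type*} [Field k] [Group G] [DecidableEq G]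
    (β : G → G → G → kˣ) (u : DD2 k G) : DD3 k G :=
  fun p => if p.2.1.2 = p.2.2.2 then
      (ddGamma β p.2.1.2 p.2.1.1 p.2.2.1 : k) * u (p.1, (p.2.1.1 * p.2.2.1, p.2.1.2))
    else 0

/-- The map `Δ ⊗ id` from `D^β(k[G])^{⊗2}` to `D^β(k[G])^{⊗3}` in the function model. -/
def comulTensorId {k G : Type*} [Field k] [Group G] [DecidableEq G]
    (β : G → G → G → kˣ) (u : DD2 k G) : DD3 k G :=
  fun p => if p.1.2 = p.2.1.2 then
      (ddGamma β p.1.2 p.1.1 p.2.1.1 : k) * u ((p.1.1 * p.2.1.1, p.1.2), p.2.2)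
    else 0

/-- The flip of the two tensor factors. -/
def ddSwap {k G : Type*} (u : DD2 k G) : DD2 k G := fun p => u (p.2, p.1)

/-- The counit `ε(⟨g,x⟩) = δ_{g,e}` of `D^β(k[G])`. -/
def ddCounit {k G : Type*} [Field k] [Group G] [Fintype G] (a : DD k G) : k :=
  ∑ x : G, a (1, x)

/-- The injection `k[G]^* → D^β(k[G])`, `δ_g ↦ ⟨g,e⟩`. -/
def ddIota {k G : Type*} [Field k] [Group G] [DecidableEq G] (f : G → k) : DD k G :=
  fun p => if p.2 = 1 then f p.1 else 0

/-- The diagonal map `D^{ββ'}(k[G]) → D^β(k[G]) ⊗ D^{β'}(k[G])`, `⟨g,x⟩ ↦ ⟨g,x⟩ ⊗ ⟨g,x⟩`. -/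
def ddDiag {k G : Type*} [Field k] [DecidableEq G] (a : DD k G) : DD2 k G :=
  fun p => if p.1 = p.2 then a p.1 else 0

/-- The antipode of `D^β(k[G])`: the linear extension of
`S(⟨g,x⟩) = (θ_{g⁻¹}(x,x⁻¹)·γ_x(g,g⁻¹))⁻¹ ⟨x⁻¹g⁻¹x, x⁻¹⟩`. -/
def ddAntipode {k G : Type*} [Field k] [Group G] (β : G → G → G → kˣ) (a : DD k G) : DD k G :=
  fun p =>
    (((ddTheta β (p.2⁻¹ * p.1 * p.2) p.2⁻¹ p.2 *
        ddGamma β p.2⁻¹ (p.2⁻¹ * p.1⁻¹ * p.2) (p.2⁻¹ * p.1 * p.2))⁻¹ : kˣ) : k) *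
      a (p.2⁻¹ * p.1⁻¹ * p.2, p.2⁻¹)

/-- The antipode of the untwisted double `D(k[G])`: `S(⟨g,x⟩) = ⟨x⁻¹g⁻¹x, x⁻¹⟩`. -/
def ddAntipode0 {k G : Type*} [Field k] [Group G] (a : DD k G) : DD k G :=
  fun p => a (p.2⁻¹ * p.1⁻¹ * p.2, p.2⁻¹)

/-- The operator `φ(x)` on `D^β(k[G])^{comm}`: the linear extension of
`φ(x)(⟨h,y⟩) = (θ_{xhx⁻¹}(x,y)/θ_{xhx⁻¹}(xyx⁻¹,x))·⟨xhx⁻¹, xyx⁻¹⟩`. -/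
def ddPhi {k G : Type*} [Field k] [Group G] (β : G → G → G → kˣ) (x : G) (a : DD k G) :
    DD k G :=
  fun p => ((ddTheta β p.1 x (x⁻¹ * p.2 * x) / ddTheta β p.1 p.2 x : kˣ) : k) *
    a (x⁻¹ * p.1 * x, x⁻¹ * p.2 * x)

/-- The span of the basis elements `⟨g,x⟩` with `gx = xg`, i.e. `D^β(k[G])^{comm}`. -/
def ddCommSpan (k G : Type*) [Field k] [Group G] [DecidableEq G] : Submodule k (DD k G) :=
  Submodule.span k {v : DD k G | ∃ g x : G, g * x = x * g ∧ v = ddBasis g x}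

/-- The underlying space of the twisted group ring `k^α[G]`. -/
abbrev TG (k G : Type*) := G → k

/-- The basis element `1_g` of `k^α[G]`. -/
def tgBasis {k G : Type*} [Field k] [DecidableEq G] (g : G) : TG k G :=
  fun z => if z = g then 1 else 0

/-- The multiplication `1_g·1_h = α(g,h) 1_{gh}` of the twisted group ring `k^α[G]`. -/
def tgMul {k G : Type*} [Field k] [Group G] [Fintype G] (α : G → G → kˣ) (a b : TG k G) :
    TG k G :=
  fun z => ∑ x : G, a x * b (x⁻¹ * z) * (α x (x⁻¹ * z) : k)

/-- The identity `1_e` of `k^α[G]`. -/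
def tgOne (k G : Type*) [Field k] [Group G] [DecidableEq G] : TG k G := tgBasis 1

/-- The inverse `α(g,g⁻¹)⁻¹·1_{g⁻¹}` of the basis element `1_g` in `k^α[G]`. -/
def tgInvBasis {k G : Type*} [Field k] [Group G] [DecidableEq G] (α : G → G → kˣ) (g : G) :
    TG k G :=
  (((α g g⁻¹)⁻¹ : kˣ) : k) • tgBasis g⁻¹

/-- Conjugation `ρ(g)(a) = 1_g · a · (1_g)⁻¹` in the twisted group ring `k^α[G]`. -/
def tgConj {k G : Type*} [Field k] [Group G] [Fintype G] [DecidableEq G]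
    (α : G → G → kˣ) (g : G) (a : TG k G) : TG k G :=
  tgMul α (tgBasis g) (tgMul α a (tgInvBasis α g))

theorem comm_inv_left {G : Type*} [Group G] {g x : G} (h : x * g = g * x) :
    x⁻¹ * g = g * x⁻¹ := by
  rw [eq_mul_inv_iff_mul_eq, mul_assoc, ← h, ← mul_assoc, inv_mul_cancel, one_mul]

theorem comm_inv_mul {G : Type*} [Group G] {g x z : G} (hx : x * g = g * x)
    (hz : z * g = g * z) : (x⁻¹ * z) * g = g * (x⁻¹ * z) := by
  rw [mul_assoc, hz, ← mul_assoc, comm_inv_left hx, mul_assoc]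

/-- The index set `{(g,x) : x ∈ Z(g)}` of the direct sum `⊕_g k^{θ_g}[Z(g)]`. -/
abbrev CentPairs (G : Type*) [Group G] := Σ g : G, {x : G // x * g = g * x}

/-- The underlying space of `⊕_g k^{θ_g}[Z(g)]`. -/
abbrev TY (k G : Type*) [Group G] := CentPairs G → k

/-- The multiplication of `⊕_g k^{θ_g}[Z(g)]`: in the `g`-th summand,
`1_x·1_y = θ_g(x,y)·1_{xy}` for `x, y ∈ Z(g)`, and distinct summands multiply to `0`. -/
def tyMul {k G : Type*} [Field k] [Group G] [Fintype G] [DecidableEq G]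
    (β : G → G → G → kˣ) (a b : TY k G) : TY k G :=
  fun q => ∑ x : {x : G // x * q.1 = q.1 * x},
    a ⟨q.1, x⟩ * b ⟨q.1, ⟨(x : G)⁻¹ * (q.2 : G), comm_inv_mul x.2 q.2.2⟩⟩ *
      (ddTheta β q.1 (x : G) ((x : G)⁻¹ * (q.2 : G)) : k)

/-- The identity of `⊕_g k^{θ_g}[Z(g)]`. -/
def tyOne (k G : Type*) [Field k] [Group G] [DecidableEq G] : TY k G :=
  fun q => if (q.2 : G) = 1 then 1 else 0

/-- The map `⊕_g k^{θ_g}[Z(g)] → D^β(k[G])` sending `1_x` in the `g`-th summand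
to `⟨g,x⟩`. -/
def tyMap {k G : Type*} [Field k] [Group G] [DecidableEq G] (f : TY k G) : DD k G :=
  fun p => if h : p.2 * p.1 = p.1 * p.2 then f ⟨p.1, ⟨p.2, h⟩⟩ else 0

/-- The action of `D^{ββ'}(k[G])` on `A ⊗ B`, assigning to `⟨g,x⟩` the endomorphism
`ρ_A(⟨g,x⟩) ⊗ ρ_B(⟨g,x⟩)` and extending linearly. -/
noncomputable def ddTensorAction {k G A B : Type*} [Field k] [Group G] [Fintype G]
    [DecidableEq G] [AddCommGroup A] [Module k A] [AddCommGroup B] [Module k B]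
    (ρA : DD k G → (A →ₗ[k] A)) (ρB : DD k G → (B →ₗ[k] B)) (a : DD k G) :
    (A ⊗[k] B) →ₗ[k] (A ⊗[k] B) :=
  ∑ p : G × G, a p • TensorProduct.map (ρA (ddBasis p.1 p.2)) (ρB (ddBasis p.1 p.2))

/- Write `g₁ = x⁻¹gx`, `g₂ = y⁻¹g₁y`, `g₃ = z⁻¹g₂z`. Once the conjugates occurring in the four
`θ`'s are expressed through these, the quotient of the two sides is the alternating product of the
cocycle identity at `(g,x,y,z)`, `(x,g₁,y,z)`, `(x,y,g₂,z)` and `(x,y,z,g₃)`. -/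

theorem inv_conj_mul {G : Type*} [Group G] (g x y : G) :
    (x * y)⁻¹ * g * (x * y) = y⁻¹ * (x⁻¹ * g * x) * y := by
  group

theorem mul_inv_conj_self {G : Type*} [Group G] (g x : G) : x * (x⁻¹ * g * x) = g * x := by
  group

theorem stmt0_general {k G : Type*} [Field k] [Group G]
    (β : G → G → G → kˣ) (hβ : IsNormalized3Cocycle β) (g x y z : G) :
    ddTheta β g x y * ddTheta β g (x * y) z =
      ddTheta β (x⁻¹ * g * x) y z * ddTheta β g x (y * z) := by
  obtain ⟨hcocycle, -⟩ := hβ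
  have h₁ := hcocycle g x y z
  have h₂ := hcocycle x (x⁻¹ * g * x) y z
  have h₃ := hcocycle x y (y⁻¹ * (x⁻¹ * g * x) * y) z
  have h₄ := hcocycle x y z (z⁻¹ * (y⁻¹ * (x⁻¹ * g * x) * y) * z)
  simp only [mul_inv_conj_self] at h₂ h₃ h₄
  simp only [ddTheta, inv_conj_mul]
  apply_fun Additive.ofMul at h₁ h₂ h₃ h₄ ⊢
  simp only [ofMul_mul, ofMul_div] at h₁ h₂ h₃ h₄ ⊢
  linear_combination (norm := abel) h₁ - h₂ + h₃ - h₄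

/-- the `θ_g` are "almost cocycles":
`θ_g(x,y)·θ_g(xy,z) = θ_{x⁻¹gx}(y,z)·θ_g(x,yz)`. -/
theorem stmt0 {k G : Type*} [Field k] [Group G] [Fintype G]
    (β : G → G → G → kˣ) (hβ : IsNormalized3Cocycle β) (g x y z : G) :
    ddTheta β g x y * ddTheta β g (x * y) z =
      ddTheta β (x⁻¹ * g * x) y z * ddTheta β g x (y * z) :=
  stmt0_general β hβ g x y z

end StringyOrbifold
end

section
/- Let k be a field, G a finite group, β a normalized 3-cocycle on G with values in kˣ, and g ∈ G. Then the restriction of θ_g to the centralizer Z(g) = {x ∈ G : xg = gx} is a normalized 2-cocycle of Z(g) with values in kˣ: θ_g(x,y)·θ_g(xy,z) = θ_g(y,z)·θ_g(x,yz) for all x,y,z ∈ Z(g), and θ_g(x,e) = θ_g(e,x) = 1 for all x ∈ Z(g). -/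
open scoped BigOperators TensorProduct

namespace StringyOrbifold

/-- `θ_g` on the centralizer of `g`, where the conjugates of `g` in `ddTheta` are all `g`. -/
def centralTwist {G M : Type*} [Mul G] [CommGroup M] (β : G → G → G → M) (g x y : G) : M :=
  β g x y * β x y g / β x g y

theorem centralTwist_cocycle {G M : Type*} [Group G] [CommGroup M] {β : G → G → G → M}
    (hc : ∀ a b c d : G, β a b c * β a (b * c) d * β b c d = β (a * b) c d * β a b (c * d))
    {g x y z : G} (hx : Commute x g) (hy : Commute y g) (hz : Commute z g) :
    centralTwist β g x y * centralTwist β g (x * y) z =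
      centralTwist β g y z * centralTwist β g x (y * z) := by
  have h₁ := congrArg Additive.ofMul (hc g x y z)
  have h₂ := congrArg Additive.ofMul (hc x y z g)
  have h₃ := congrArg Additive.ofMul (hc x y g z)
  have h₄ := congrArg Additive.ofMul (hc x g y z)
  rw [hz.eq] at h₂
  rw [hy.eq] at h₃
  rw [hx.eq] at h₄
  apply Additive.ofMul.injective
  simp only [centralTwist, ofMul_mul, ofMul_div] at h₁ h₂ h₃ h₄ ⊢
  linear_combination (norm := abel) h₁ - h₂ + h₃ - h₄

section ddTheta

variable {k G : Type*} [Field k] [Group G] {β : G → G → G → kˣ}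

theorem ddTheta_eq_centralTwist {g x y : G} (hx : Commute x g) (hy : Commute y g) :
    ddTheta β g x y = centralTwist β g x y := by
  simp only [ddTheta, centralTwist, hx.inv_mul_cancel, (hx.mul_left hy).inv_mul_cancel]

theorem ddTheta_one_right (hn : ∀ a b : G, β 1 a b = 1 ∧ β a 1 b = 1 ∧ β a b 1 = 1)
    (g x : G) : ddTheta β g x 1 = 1 := by
  simp only [ddTheta, (hn _ _).2.1, (hn _ _).2.2, mul_one, div_one]

theorem ddTheta_one_left (hn : ∀ a b : G, β 1 a b = 1 ∧ β a 1 b = 1 ∧ β a b 1 = 1)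
    (g x : G) : ddTheta β g 1 x = 1 := by
  simp only [ddTheta, (hn _ _).1, (hn _ _).2.1, mul_one, div_one]

end ddTheta

theorem stmt1_general {k G : Type*} [Field k] [Group G]
    (β : G → G → G → kˣ) (hβ : IsNormalized3Cocycle β) (g : G) :
    (∀ x y z : G, x * g = g * x → y * g = g * y → z * g = g * z →
      ddTheta β g x y * ddTheta β g (x * y) z = ddTheta β g y z * ddTheta β g x (y * z)) ∧
    (∀ x : G, x * g = g * x → ddTheta β g x 1 = 1 ∧ ddTheta β g 1 x = 1) := by
  obtain ⟨hc, hn⟩ := hβ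
  refine ⟨fun x y z hx hy hz => ?_,
    fun x _ => ⟨ddTheta_one_right hn g x, ddTheta_one_left hn g x⟩⟩
  rw [ddTheta_eq_centralTwist hx hy, ddTheta_eq_centralTwist (Commute.mul_left hx hy) hz,
    ddTheta_eq_centralTwist hy hz, ddTheta_eq_centralTwist hx (Commute.mul_left hy hz)]
  exact centralTwist_cocycle hc hx hy hz

/-- `θ_g` restricted to the centralizer `Z(g)` is a normalized 2-cocycle. -/
theorem stmt1 {k G : Type*} [Field k] [Group G] [Fintype G]
    (β : G → G → G → kˣ) (hβ : IsNormalized3Cocycle β) (g : G) :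
    (∀ x y z : G, x * g = g * x → y * g = g * y → z * g = g * z →
      ddTheta β g x y * ddTheta β g (x * y) z = ddTheta β g y z * ddTheta β g x (y * z)) ∧
    (∀ x : G, x * g = g * x → ddTheta β g x 1 = 1 ∧ ddTheta β g 1 x = 1) :=
  stmt1_general β hβ g

end StringyOrbifold
end

section
/- Let k be a field, G a finite group, and β a normalized 3-cocycle on G with values in kˣ. Then the element v⁻¹ := Σ_{g∈G} ⟨g,g⟩ is central in the twisted Drinfel'd double D^β(k[G]), i.e. v⁻¹·a = a·v⁻¹ for every a ∈ D^β(k[G]). -/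
open scoped BigOperators TensorProduct

namespace StringyOrbifold

/-!
Both `v⁻¹·⟨g,y⟩` and `⟨g,y⟩·v⁻¹` are multiples of `⟨g,gy⟩`, with coefficients `θ_g(g,y)` and
`θ_g(y,y⁻¹gy)`. Both reduce to `β(g,y,y⁻¹gy)`: after simplifying the conjugates, the other
factor of the numerator equals the denominator.
-/

theorem sum_ddBasis_diag_apply {k G : Type*} [Field k] [DecidableEq G] [Fintype G] (g x : G) :
    (∑ h : G, (ddBasis h h : DD k G)) (g, x) = if x = g then 1 else 0 := by
  simp only [Finset.sum_apply, ddBasis, Prod.mk.injEq]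
  split_ifs with hxg
  · simp [hxg]
  · exact Finset.sum_eq_zero fun h _ => if_neg fun hh => hxg (hh.2.trans hh.1.symm)

section Centrality

variable {k G : Type*} [Field k] [Group G]

theorem ddTheta_self_left (β : G → G → G → kˣ) (g x : G) :
    ddTheta β g g x = ddTheta β g x (x⁻¹ * g * x) := by
  have hgx : (g * x)⁻¹ * g * (g * x) = x⁻¹ * g * x := by group
  have hg : g⁻¹ * g * g = g := by group
  have hx : (x * (x⁻¹ * g * x))⁻¹ * g * (x * (x⁻¹ * g * x)) = x⁻¹ * g * x := by group
  simp only [ddTheta, hgx, hg, hx, mul_comm (β g g x), mul_div_cancel_right]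

theorem inv_mul_eq_conj_iff (g t x : G) : x⁻¹ * t = x⁻¹ * g * x ↔ x = g⁻¹ * t := by
  rw [mul_assoc, mul_left_cancel_iff, eq_inv_mul_iff_mul_eq, eq_comm]

variable [DecidableEq G] [Fintype G] (β : G → G → G → kˣ)

theorem ddMul_sum_diag_left_apply (a : DD k G) (g t : G) :
    ddMul β (∑ h : G, ddBasis h h) a (g, t) = a (g, g⁻¹ * t) * ddTheta β g g (g⁻¹ * t) := by
  simp only [ddMul, sum_ddBasis_diag_apply, ite_mul, one_mul, zero_mul, Finset.sum_ite_eq',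
    Finset.mem_univ, if_true, inv_mul_cancel, one_mul]

theorem ddMul_sum_diag_right_apply (a : DD k G) (g t : G) :
    ddMul β a (∑ h : G, ddBasis h h) (g, t) =
      a (g, g⁻¹ * t) * ddTheta β g (g⁻¹ * t) ((g⁻¹ * t)⁻¹ * g * (g⁻¹ * t)) := by
  simp only [ddMul, sum_ddBasis_diag_apply, mul_ite, mul_one, mul_zero, ite_mul, zero_mul,
    inv_mul_eq_conj_iff, Finset.sum_ite_eq', Finset.mem_univ, if_true]
  congr 3
  group

end Centrality

theorem stmt4_general {k G : Type*} [Field k] [Group G] [Fintype G] [DecidableEq G]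
    (β : G → G → G → kˣ) :
    ∀ a : DD k G,
      ddMul β (∑ g : G, ddBasis g g) a = ddMul β a (∑ g : G, ddBasis g g) := by
  intro a
  funext ⟨g, t⟩
  rw [ddMul_sum_diag_left_apply, ddMul_sum_diag_right_apply, ddTheta_self_left]

/-- `v⁻¹ = Σ_{g∈G} ⟨g,g⟩` is central in `D^β(k[G])`. -/
theorem stmt4 {k G : Type*} [Field k] [Group G] [Fintype G] [DecidableEq G]
    (β : G → G → G → kˣ) (hβ : IsNormalized3Cocycle β) :
    ∀ a : DD k G,
      ddMul β (∑ g : G, ddBasis g g) a = ddMul β a (∑ g : G, ddBasis g g) :=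
  stmt4_general β

end StringyOrbifold
end

section
/- Let k be a field, G a finite group, and β a normalized 3-cocycle on G with values in kˣ. Then the k-linear map Δ : D^β(k[G]) → D^β(k[G]) ⊗_k D^β(k[G]) defined on basis elements by Δ(⟨g,x⟩) = Σ_{(g₁,g₂): g₁g₂ = g} γ_x(g₁,g₂)·⟨g₁,x⟩ ⊗ ⟨g₂,x⟩ is a homomorphism of unital k-algebras, where the tensor product carries the componentwise multiplication. -/
open scoped BigOperators TensorProduct

namespace StringyOrbifold

/-!
`Δ` is visibly linear. Evaluating `Δ(ab)` and `Δ(a)Δ(b)` at `⟨g₁,u⟩ ⊗ ⟨g₂,u⟩`, multiplicativity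
reduces to `γ_{xy}(a,b) θ_{ab}(x,y) = γ_x(a,b) γ_y(x⁻¹ax, x⁻¹bx) θ_a(x,y) θ_b(x,y)`, which is a
product of six instances of the 3-cocycle condition; unitality comes from `γ_e = 1`, which holds
because `β` is normalized.
-/

theorem ddGamma_one {k G : Type*} [Field k] [Group G] {β : G → G → G → kˣ}
    (hβ : IsNormalized3Cocycle β) (g₁ g₂ : G) : ddGamma β 1 g₁ g₂ = 1 := by
  simp [ddGamma, (hβ.2 _ _).1, (hβ.2 _ _).2.1, (hβ.2 _ _).2.2]

theorem ddGamma_mul_ddTheta {k G : Type*} [Field k] [Group G] {β : G → G → G → kˣ}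
    (hβ : ∀ g h l m : G, β g h l * β g (h * l) m * β h l m = β (g * h) l m * β g h (l * m))
    (a b x y : G) :
    ddGamma β (x * y) a b * ddTheta β (a * b) x y =
      ddGamma β x a b * ddGamma β y (x⁻¹ * a * x) (x⁻¹ * b * x) * ddTheta β a x y *
        ddTheta β b x y := by
  -- In `Additive kˣ` the cocycle identities become linear relations among the values of `β`.
  have hβ' (g h l m : G) := congrArg Additive.ofMul (hβ g h l m)
  simp only [ofMul_mul] at hβ'
  apply Additive.ofMul.injective
  simp only [ddGamma, ddTheta, ofMul_mul, ofMul_div]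
  linear_combination (norm := skip) hβ' a x (x⁻¹ * b * x) y - hβ' a b x y
    - hβ' a x y ((x * y)⁻¹ * b * (x * y)) - hβ' x (x⁻¹ * a * x) (x⁻¹ * b * x) y
    + hβ' x (x⁻¹ * a * x) y ((x * y)⁻¹ * b * (x * y))
    - hβ' x y ((x * y)⁻¹ * a * (x * y)) ((x * y)⁻¹ * b * (x * y))
  simp only [mul_assoc, mul_inv_rev, mul_inv_cancel_left]
  abel

section Comul

variable {k G : Type*} [Field k] [Group G] [DecidableEq G] (β : G → G → G → kˣ)

theorem ddComul_add (a b : DD k G) : ddComul β (a + b) = ddComul β a + ddComul β b := by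
  ext p
  simp only [ddComul, Pi.add_apply]
  split_ifs <;> simp [mul_add]

theorem ddComul_smul (c : k) (a : DD k G) : ddComul β (c • a) = c • ddComul β a := by
  ext p
  simp only [ddComul, Pi.smul_apply, smul_eq_mul]
  split_ifs <;> simp [mul_left_comm]

variable [Fintype G]

theorem ddComul_ddBasis (g x : G) :
    ddComul β (ddBasis g x) =
      ∑ q : G × G, if q.1 * q.2 = g then
        (ddGamma β x q.1 q.2 : k) • ddTensor (ddBasis q.1 x) (ddBasis q.2 x) else 0 := by
  ext ⟨⟨g₁, u⟩, g₂, v⟩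
  rw [Finset.sum_apply, Fintype.sum_eq_single (g₁, g₂)]
  · simp only [ddComul, ddBasis, ddTensor, ite_apply, Pi.smul_apply, Pi.zero_apply, smul_eq_mul,
      Prod.mk.injEq]
    split_ifs <;> simp_all
  · rintro ⟨q₁, q₂⟩ hq
    simp only [ddBasis, ddTensor, ite_apply, Pi.smul_apply, Pi.zero_apply, smul_eq_mul,
      Prod.mk.injEq]
    split_ifs <;> simp_all

theorem ddOne_apply (p : G × G) : ddOne k G p = if p.2 = 1 then 1 else 0 := by
  simp [ddOne, ddBasis, Finset.sum_apply, Prod.ext_iff, ite_and]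

theorem ddComul_ddOne (hβ : IsNormalized3Cocycle β) :
    ddComul β (ddOne k G) = ddTensor (ddOne k G) (ddOne k G) := by
  ext ⟨⟨g₁, u⟩, g₂, v⟩
  simp only [ddComul, ddTensor, ddOne_apply]
  split_ifs <;> simp_all [ddGamma_one hβ]

theorem ddComul_ddMul
    (hβ : ∀ g h l m : G, β g h l * β g (h * l) m * β h l m = β (g * h) l m * β g h (l * m))
    (a b : DD k G) :
    ddComul β (ddMul β a b) = dd2Mul β β (ddComul β a) (ddComul β b) := by
  ext ⟨⟨g₁, u⟩, g₂, v⟩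
  simp only [ddComul, ddMul, dd2Mul, ite_mul, zero_mul, Finset.sum_ite_eq, Finset.mem_univ,
    if_true, mul_right_inj]
  split_ifs with huv
  · subst huv
    rw [Finset.mul_sum]
    refine Finset.sum_congr rfl fun x _ => ?_
    have key := congrArg Units.val (ddGamma_mul_ddTheta hβ g₁ g₂ x (x⁻¹ * u))
    rw [mul_inv_cancel_left] at key
    push_cast at key
    rw [show x⁻¹ * (g₁ * g₂) * x = x⁻¹ * g₁ * x * (x⁻¹ * g₂ * x) by group]
    linear_combination (a (g₁ * g₂, x) * b (x⁻¹ * g₁ * x * (x⁻¹ * g₂ * x), x⁻¹ * u)) * key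
  · simp

end Comul

/-- the comultiplication `Δ` is a homomorphism of unital `k`-algebras
`D^β(k[G]) → D^β(k[G]) ⊗ D^β(k[G])`. -/
theorem stmt5 {k G : Type*} [Field k] [Group G] [Fintype G] [DecidableEq G]
    (β : G → G → G → kˣ) (hβ : IsNormalized3Cocycle β) :
    (∀ g x : G, ddComul β (ddBasis g x) =
      ∑ q : G × G, if q.1 * q.2 = g then
        (ddGamma β x q.1 q.2 : k) • ddTensor (ddBasis q.1 x) (ddBasis q.2 x) else 0) ∧
    (∀ a b : DD k G, ddComul β (a + b) = ddComul β a + ddComul β b) ∧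
    (∀ (c : k) (a : DD k G), ddComul β (c • a) = c • ddComul β a) ∧
    (∀ a b : DD k G, ddComul β (ddMul β a b) = dd2Mul β β (ddComul β a) (ddComul β b)) ∧
    ddComul β (ddOne k G) = ddTensor (ddOne k G) (ddOne k G) :=
  ⟨ddComul_ddBasis β, ddComul_add β, ddComul_smul β, ddComul_ddMul β hβ.1, ddComul_ddOne β hβ⟩

end StringyOrbifold
end
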